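/- arXiv:2112.04227 — 7 statements merged into one kernel-verified Lean document; each statement's English description precedes it below -/
import Mathlib

section
/- A perfect matching M is Pareto optimal for a complete strict preference profile ≻ if and only if there exists a permutation σ of the agents such that M equals the serial dictatorship matching SD_≻(σ). -/
/-!
A house allocation instance has agents `Fin n` and houses `Fin n`.  The preference
profile is given by rank functions: `P a : Fin n ≃ Fin n` sends each house to its
(0-based) rank in agent `a`'s strict linear order, so `h ≻_a h'` iff `P a h < P a h'`.
A matching is a bijection, modelled as `M : Equiv.Perm (Fin n)` sending agents to houses.
-/

/-- `M'` dominates `M`: every agent weakly prefers its house under `M'`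
(smaller rank is better) and some agent strictly prefers it. -/
def Dominates {n : ℕ} (P : Fin n → (Fin n ≃ Fin n)) (M' M : Equiv.Perm (Fin n)) : Prop :=
  (∀ a, P a (M' a) ≤ P a (M a)) ∧ ∃ a, P a (M' a) < P a (M a)

/-- `M` is Pareto optimal: no matching dominates it. -/
def ParetoOptimal {n : ℕ} (P : Fin n → (Fin n ≃ Fin n)) (M : Equiv.Perm (Fin n)) : Prop :=
  ¬ ∃ M' : Equiv.Perm (Fin n), Dominates P M' M

/-- `IsSD P σ M` says that `M` is the serial dictatorship matching `SD_≻(σ)`: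
at every step `i` agent `σ i` is matched to the house it most prefers among the
houses not matched to `σ 0, …, σ (i-1)`.  Since `M` is a bijection, those remaining
houses are exactly `M (σ j)` for `j ≥ i`, so the condition says that for all
`i ≤ j`, agent `σ i` weakly prefers `M (σ i)` to `M (σ j)`. -/
def IsSD {n : ℕ} (P : Fin n → (Fin n ≃ Fin n)) (σ M : Equiv.Perm (Fin n)) : Prop :=
  ∀ i j : Fin n, i ≤ j → P (σ i) (M (σ i)) ≤ P (σ i) (M (σ j))

/-!
Serial dictatorship gives each dictator the best house still available, so no later agent's
house can tempt an earlier one; along the dictatorship order, any matching that weakly improves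
everybody must therefore agree with it, agent by agent.

Conversely, if a Pareto optimal matching admitted a nonempty set of agents each of whom envies
the house of another member, following the envy map around one of its cycles and trading
houses along it would give a dominating matching. So every nonempty set of agents contains one
who likes its own house best among the houses of the set; choosing such agents one after
another lists all agents in a serial dictatorship order.
-/

open Function Equiv

namespace Function

variable {α : Type*}

theorem periodicPts_nonempty [Finite α] [Nonempty α] (f : α → α) :
    (periodicPts f).Nonempty := by
  obtain ⟨m, n, hmn, heq⟩ :=
    Finite.exists_ne_map_eq_of_infinite (fun k : ℕ => f^[k] (Classical.arbitrary α))
  wlog hlt : m < n generalizing m n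
  · exact this n m hmn.symm heq.symm (by omega)
  refine ⟨f^[m] (Classical.arbitrary α), mk_mem_periodicPts (Nat.sub_pos_of_lt hlt) ?_⟩
  rw [IsPeriodicPt, IsFixedPt, ← iterate_add_apply, Nat.sub_add_cancel hlt.le, heq]

open Classical in
noncomputable def periodicPtsPerm (f : α → α) : Perm α :=
  Perm.ofSubtype ((bijOn_periodicPts f).equiv f)

theorem periodicPtsPerm_apply_of_mem {f : α → α} {x : α} (hx : x ∈ periodicPts f) :
    periodicPtsPerm f x = f x := by
  classical
  simp [periodicPtsPerm, Perm.ofSubtype_apply_of_mem _ hx, Set.BijOn.equiv]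

theorem periodicPtsPerm_apply_of_notMem {f : α → α} {x : α} (hx : x ∉ periodicPts f) :
    periodicPtsPerm f x = x := by
  classical
  simp [periodicPtsPerm, Perm.ofSubtype_apply_of_not_mem _ hx]

end Function

theorem Finset.exists_nodup_pairwise_toFinset_eq {α : Type*} [DecidableEq α]
    (R : α → α → Prop) (h : ∀ S : Finset α, S.Nonempty → ∃ a ∈ S, ∀ b ∈ S, R a b)
    (S : Finset α) : ∃ l : List α, l.Nodup ∧ l.toFinset = S ∧ l.Pairwise R := by
  induction S using Finset.strongInduction with
  | _ S ih =>
  rcases S.eq_empty_or_nonempty with rfl | hS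
  · exact ⟨[], List.nodup_nil, rfl, List.Pairwise.nil⟩
  obtain ⟨a, haS, ha⟩ := h S hS
  obtain ⟨l, hnd, hl, hpw⟩ := ih (S.erase a) (erase_ssubset haS)
  have hmem : ∀ b ∈ l, b ∈ S.erase a := fun b hb => hl ▸ List.mem_toFinset.mpr hb
  refine ⟨a :: l, ?_, by simp [hl, insert_erase haS], ?_⟩
  · exact List.nodup_cons.mpr ⟨fun hal => by simpa using hmem a hal, hnd⟩
  · exact List.pairwise_cons.mpr ⟨fun b hb => ha b (mem_of_mem_erase (hmem b hb)), hpw⟩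

theorem exists_equiv_fin_forall_le_imp {α : Type*} [Fintype α] [DecidableEq α] {m : ℕ}
    (R : α → α → Prop) (hcard : Fintype.card α = m)
    (h : ∀ S : Finset α, S.Nonempty → ∃ a ∈ S, ∀ b ∈ S, R a b) :
    ∃ σ : Fin m ≃ α, ∀ i j, i ≤ j → R (σ i) (σ j) := by
  obtain ⟨l, hnd, hl, hpw⟩ := Finset.exists_nodup_pairwise_toFinset_eq R h Finset.univ
  have hmem (a : α) : a ∈ l := List.mem_toFinset.mp (hl ▸ Finset.mem_univ a)
  have hlen : l.length = m := by
    rw [← hcard, ← List.toFinset_card_of_nodup hnd, hl, Finset.card_univ]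
  set σ := (finCongr hlen.symm).trans (List.Nodup.getEquivOfForallMemList l hnd hmem)
  refine ⟨σ, fun i j hij => ?_⟩
  rcases hij.eq_or_lt with rfl | hlt
  · -- `h` applied to singletons makes `R` reflexive.
    obtain ⟨a, ha, hR⟩ := h {σ i} (Finset.singleton_nonempty _)
    rw [Finset.mem_singleton.mp ha] at hR
    exact hR _ (Finset.mem_singleton_self _)
  · exact List.pairwise_iff_get.mp hpw _ _ ((Fin.cast_lt_cast hlen.symm).mpr hlt)

theorem IsSD.eq_of_forall_le {n : ℕ} {P : Fin n → (Fin n ≃ Fin n)} {σ M M' : Perm (Fin n)}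
    (hσ : IsSD P σ M) (hle : ∀ a, P a (M' a) ≤ P a (M a)) : M' = M := by
  suffices h : ∀ i, M' (σ i) = M (σ i) from Equiv.ext fun a => by simpa using h (σ.symm a)
  intro i
  induction i using WellFoundedLT.induction with
  | _ i ih =>
  -- The house `M' (σ i)` is not held under `M` by an earlier dictator, as these keep theirs.
  set k := σ.symm (M.symm (M' (σ i)))
  have hk : M (σ k) = M' (σ i) := by simp [k]
  have hik : i ≤ k := by
    by_contra! hki
    exact hki.ne (σ.injective (M'.injective ((ih k hki).trans hk)))
  exact (P (σ i)).injective (le_antisymm (hle _) (hk ▸ hσ i k hik))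

theorem ParetoOptimal.exists_forall_le {n : ℕ} {P : Fin n → (Fin n ≃ Fin n)}
    {M : Perm (Fin n)} (hM : ParetoOptimal P M) {S : Finset (Fin n)} (hS : S.Nonempty) :
    ∃ a ∈ S, ∀ b ∈ S, P a (M a) ≤ P a (M b) := by
  classical
  by_contra! henvy
  have henvy' (a : S) : ∃ b : S, P a (M b) < P a (M a) :=
    let ⟨b, hb, h⟩ := henvy a a.2; ⟨⟨b, hb⟩, h⟩
  choose f hf using henvy'
  have : Nonempty S := hS.to_subtype
  obtain ⟨x, hx⟩ := periodicPts_nonempty f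
  set g : Perm (Fin n) := Perm.ofSubtype (periodicPtsPerm f)
  have hg (a : S) : P a (M (g a)) < P a (M a) ∨ g a = a := by
    by_cases ha : a ∈ periodicPts f
    · simpa [g, Perm.ofSubtype_apply_of_mem, periodicPtsPerm_apply_of_mem ha] using Or.inl (hf a)
    · simp [g, Perm.ofSubtype_apply_of_mem, periodicPtsPerm_apply_of_notMem ha]
  refine hM ⟨g.trans M, fun a => ?_, x, ?_⟩
  · by_cases ha : a ∈ S
    · rcases hg ⟨a, ha⟩ with h | h
      · exact h.le
      · simp [h]
    · simp [g, Perm.ofSubtype_apply_of_not_mem _ ha]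
  · simpa [g, Perm.ofSubtype_apply_of_mem, periodicPtsPerm_apply_of_mem hx] using hf x

/-- A perfect matching is Pareto optimal iff it is the outcome of serial dictatorship
for some permutation of the agents. -/
theorem paretoOptimal_iff_exists_serialDictatorship {n : ℕ}
    (P : Fin n → (Fin n ≃ Fin n)) (M : Equiv.Perm (Fin n)) :
    ParetoOptimal P M ↔ ∃ σ : Equiv.Perm (Fin n), IsSD P σ M := by
  constructor
  · intro hM
    exact exists_equiv_fin_forall_le_imp (fun a b => P a (M a) ≤ P a (M b)) (Fintype.card_fin n)
      fun S hS => hM.exists_forall_le hS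
  · rintro ⟨σ, hσ⟩ ⟨M', hle, a, hlt⟩
    rw [hσ.eq_of_forall_le hle] at hlt
    exact lt_irrefl _ hlt
end

section
/- For every finite bipartite graph G = (V,E) there exists a partition of V into three sets 𝒪, ℰ, 𝒰 such that: (i) every maximum-cardinality matching of G contains only edges joining two vertices of 𝒰 or joining a vertex of ℰ to a vertex of 𝒪; (ii) every maximum-cardinality matching saturates every vertex of 𝒰 and every vertex of 𝒪; (iii) the cardinality of a maximum matching equals |𝒪| + |𝒰|/2; and (iv) G has no edge joining two vertices of ℰ and no edge joining a vertex of ℰ to a vertex of 𝒰. -/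
/-!
Count a matching by the vertices it covers, twice its number of edges. Let `ℰ` be the set of
vertices missed by some maximum matching, `𝒪` the vertices outside `ℰ` with a neighbour in `ℰ`,
and `𝒰` the rest. For matchings `M`, `N` and a vertex set `K` closed under both, taking `N` on `K`
and `M` off `K` gives a matching; if `M` and `N` are maximum, so is it.

If `a ∉ V(M)`, `b ∉ V(N)` and `ab` is an edge, switching `M` to `N` on the vertices reachable
from `b` along `M ∪ N` frees both `a` and `b`, contradicting maximality, unless `a` is reachable;
then the alternating path from `b` to `a` has even length, so `a` and `b` lie on the same side.
Hence `ℰ` is independent. The same switching, applied to `M - {v, w}` and `N`, shows that in a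
maximum matching the partner of a vertex of `𝒪` lies in `ℰ`. So every maximum matching matches
`𝒪` onto its vertices in `ℰ` and covers `𝒪 ∪ 𝒰`, which gives the count.
-/

open SimpleGraph

def IsMaximumMatching {V : Type*} [Fintype V] {G : SimpleGraph V} (M : G.Subgraph) : Prop :=
  M.IsMatching ∧ ∀ M' : G.Subgraph, M'.IsMatching → M'.edgeSet.ncard ≤ M.edgeSet.ncard

namespace SimpleGraph.Subgraph

variable {V : Type*} {G : SimpleGraph V} {M N : G.Subgraph}

theorem IsMatching.ncard_verts [Finite V] (hM : M.IsMatching) :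
    M.verts.ncard = 2 * M.edgeSet.ncard := by
  classical
  have := Fintype.ofFinite V
  have hdeg : ∀ v, M.spanningCoe.degree v = if v ∈ M.verts then 1 else 0 := by
    intro v
    rw [degree_spanningCoe]
    split_ifs with hv
    · exact isMatching_iff_forall_degree.mp hM v hv
    · exact degree_of_notMem_verts hv
  rw [← edgeSet_spanningCoe, Set.ncard_eq_toFinset_card', Set.ncard_eq_toFinset_card',
    ← edgeFinset, ← sum_degrees_eq_twice_card_edges]
  simp [hdeg, Finset.sum_boole]

lemma IsMatching.ncard_eq_of_adj_iff (hM : M.IsMatching) {S T : Set V} (hS : S ⊆ M.verts)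
    (hT : T ⊆ M.verts) (hST : ∀ ⦃x y⦄, M.Adj x y → (x ∈ S ↔ y ∈ T)) : S.ncard = T.ncard := by
  refine Set.ncard_congr (fun x hx => (hM (hS hx)).exists.choose)
    (fun x hx => (hST (hM (hS hx)).exists.choose_spec).mp hx)
    (fun x x' hx hx' h => hM.eq_of_adj_right (hM (hS hx)).exists.choose_spec
      (h ▸ (hM (hS hx')).exists.choose_spec)) fun y hy => ?_
  obtain ⟨x, hyx, -⟩ := hM (hT hy)
  have hx : x ∈ S := (hST hyx.symm).mpr hy
  exact ⟨x, hx, hM.eq_of_adj_left (hM (hS hx)).exists.choose_spec hyx.symm⟩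

lemma IsMatching.deleteVerts (hM : M.IsMatching) {s : Set V}
    (hs : ∀ ⦃x y⦄, M.Adj x y → x ∈ s → y ∈ s) : (M.deleteVerts s).IsMatching := by
  rintro x ⟨hxM, hxs⟩
  obtain ⟨y, hxy, hy⟩ := hM hxM
  refine ⟨y, deleteVerts_adj.mpr ⟨hxM, hxs, M.edge_vert hxy.symm, ?_, hxy⟩,
    fun z hz => hy z (deleteVerts_adj.mp hz).2.2.2.2⟩
  exact fun hys => hxs (hs hxy.symm hys)

lemma IsMatching.mem_pair_of_adj (hM : M.IsMatching) {v w x y : V} (hvw : M.Adj v w)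
    (hxy : M.Adj x y) (hx : x ∈ ({v, w} : Set V)) : y ∈ ({v, w} : Set V) := by
  rcases hx with rfl | rfl
  · exact Or.inr (hM.eq_of_adj_left hxy hvw)
  · exact Or.inl (hM.eq_of_adj_left hxy hvw.symm)

lemma IsMatching.deleteVerts_pair (hM : M.IsMatching) {v w : V} (hvw : M.Adj v w) :
    (M.deleteVerts {v, w}).IsMatching :=
  hM.deleteVerts fun _ _ hxy hx => hM.mem_pair_of_adj hvw hxy hx

lemma ncard_verts_deleteVerts_pair [Finite V] {v w : V} (hvw : M.Adj v w) :
    (M.deleteVerts {v, w}).verts.ncard + 2 = M.verts.ncard := by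
  rw [deleteVerts_verts, ← Set.ncard_pair hvw.ne]
  exact Set.ncard_sdiff_add_ncard_of_subset
    (Set.pair_subset (M.edge_vert hvw) (M.edge_vert hvw.symm))

lemma IsMatching.sup_subgraphOfAdj (hM : M.IsMatching) {a b : V} (hab : G.Adj a b)
    (ha : a ∉ M.verts) (hb : b ∉ M.verts) : (M ⊔ G.subgraphOfAdj hab).IsMatching := by
  refine hM.sup (IsMatching.subgraphOfAdj hab) ?_
  rw [support_subgraphOfAdj, hM.support_eq_verts, Set.disjoint_insert_right,
    Set.disjoint_singleton_right]
  exact ⟨ha, hb⟩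

lemma ncard_verts_sup_subgraphOfAdj [Finite V] {a b : V} (hab : G.Adj a b)
    (ha : a ∉ M.verts) (hb : b ∉ M.verts) :
    (M ⊔ G.subgraphOfAdj hab).verts.ncard = M.verts.ncard + 2 := by
  rw [verts_sup, subgraphOfAdj_verts, Set.ncard_union_eq, Set.ncard_pair hab.ne]
  rw [Set.disjoint_insert_right, Set.disjoint_singleton_right]
  exact ⟨ha, hb⟩

def piecewise (K : Set V) (N M : G.Subgraph) : G.Subgraph :=
  N.deleteVerts Kᶜ ⊔ M.deleteVerts K

variable {K : Set V}

lemma verts_piecewise : (piecewise K N M).verts = N.verts ∩ K ∪ M.verts \ K := by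
  simp [piecewise]

lemma piecewise_adj {x y : V} :
    (piecewise K N M).Adj x y ↔ N.Adj x y ∧ x ∈ K ∧ y ∈ K ∨ M.Adj x y ∧ x ∉ K ∧ y ∉ K := by
  simp only [piecewise, sup_adj, deleteVerts_adj, Set.mem_compl_iff, not_not]
  constructor
  · rintro (⟨-, hx, -, hy, h⟩ | ⟨-, hx, -, hy, h⟩)
    · exact Or.inl ⟨h, hx, hy⟩
    · exact Or.inr ⟨h, hx, hy⟩
  · rintro (⟨h, hx, hy⟩ | ⟨h, hx, hy⟩)
    · exact Or.inl ⟨N.edge_vert h, hx, N.edge_vert h.symm, hy, h⟩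
    · exact Or.inr ⟨M.edge_vert h, hx, M.edge_vert h.symm, hy, h⟩

lemma ncard_verts_piecewise [Finite V] :
    (piecewise K N M).verts.ncard = (N.verts ∩ K).ncard + (M.verts \ K).ncard := by
  rw [verts_piecewise, Set.ncard_union_eq]
  exact Set.disjoint_of_subset_left Set.inter_subset_right Set.disjoint_sdiff_right

lemma IsMatching.piecewise (hN : N.IsMatching) (hM : M.IsMatching)
    (hKN : ∀ ⦃x y⦄, N.Adj x y → x ∈ K → y ∈ K) (hKM : ∀ ⦃x y⦄, M.Adj x y → x ∈ K → y ∈ K) :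
    (piecewise K N M).IsMatching := by
  have hKN' : ∀ ⦃x y⦄, N.Adj x y → x ∈ Kᶜ → y ∈ Kᶜ :=
    fun _ _ hxy hx hy => hx (hKN hxy.symm hy)
  refine (hN.deleteVerts hKN').sup (hM.deleteVerts hKM) ?_
  rw [(hN.deleteVerts hKN').support_eq_verts, (hM.deleteVerts hKM).support_eq_verts]
  exact Set.disjoint_left.mpr fun _ hxN hxM => hxN.2 hxM.2

/-- The edges of such a path alternate between `P` and `Q`, starting with `P`. -/
theorem IsMatching.length_parity_of_isPath {P Q : G.Subgraph} (hP : P.IsMatching)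
    (hQ : Q.IsMatching) {H : SimpleGraph V} (hH : H ≤ P.spanningCoe ⊔ Q.spanningCoe)
    {u v : V} (p : H.Walk u v) (hp : p.IsPath) (hu : ∀ x ∈ p.support, ¬ Q.Adj u x) :
    (v ∉ P.verts → Even p.length) ∧ (v ∉ Q.verts → p.length ≠ 0 → Odd p.length) := by
  induction p generalizing P Q with
  | nil => simp
  | @cons u x v hux p ih =>
    rw [Walk.cons_isPath_iff] at hp
    have hPux : P.Adj u x := (hH hux).resolve_right (hu x (by simp))
    have hx : ∀ y ∈ p.support, ¬ P.Adj x y := fun y hy hxy =>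
      hp.2 (hP.eq_of_adj_left hxy hPux.symm ▸ hy)
    obtain ⟨ihQ, ihP⟩ := ih hQ hP (hH.trans (sup_comm _ _).le) hp.1 hx
    simp only [Walk.length_cons, Nat.even_add_one, Nat.odd_add_one, Nat.not_even_iff_odd,
      ne_eq, Nat.add_eq_zero_iff, one_ne_zero, and_false, not_false_eq_true, forall_const]
    refine ⟨fun hv => ?_, fun hv => Nat.not_odd_iff_even.mpr (ihQ hv)⟩
    by_cases hp0 : p.length = 0
    · cases p with
      | nil => exact absurd (P.edge_vert hPux.symm) hv
      | cons => simp at hp0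
    · exact ihP hv hp0

/-- The alternating path from `u` to `v` has even length, so with the edge `uv` it would close
an odd cycle. -/
theorem IsMatching.not_adj_of_reachable (hG : G.Colorable 2) {P Q : G.Subgraph}
    (hP : P.IsMatching) (hQ : Q.IsMatching) {u v : V} (hu : u ∉ Q.verts) (hv : v ∉ P.verts)
    (huv : (P.spanningCoe ⊔ Q.spanningCoe).Reachable u v) : ¬ G.Adj u v := by
  classical
  intro hadj
  obtain ⟨p, hp⟩ := huv.some.toPath
  have heven := (hP.length_parity_of_isPath hQ le_rfl p hp
    fun x _ h => hu (Q.edge_vert h)).1 hv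
  have hHG : P.spanningCoe ⊔ Q.spanningCoe ≤ G := sup_le P.spanningCoe_le Q.spanningCoe_le
  have hloop := two_colorable_iff_forall_loop_even.mp hG v (.cons hadj.symm (p.mapLe hHG))
  rw [Walk.length_cons, Walk.length_mapLe, Nat.even_add_one] at hloop
  exact hloop heven

end SimpleGraph.Subgraph

namespace IsMaximumMatching

variable {V : Type*} [Fintype V] {G : SimpleGraph V} {M M' N : G.Subgraph}

lemma ncard_verts_le (hM : IsMaximumMatching M) (hM' : M'.IsMatching) :
    M'.verts.ncard ≤ M.verts.ncard := by
  rw [hM.1.ncard_verts, hM'.ncard_verts]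
  exact Nat.mul_le_mul_left 2 (hM.2 M' hM')

lemma of_ncard_verts_le (hM : IsMaximumMatching M) (hM' : M'.IsMatching)
    (h : M.verts.ncard ≤ M'.verts.ncard) : IsMaximumMatching M' := by
  refine ⟨hM', fun M'' hM'' => ?_⟩
  have := (hM.ncard_verts_le hM'').trans h
  rw [hM''.ncard_verts, hM'.ncard_verts] at this
  omega

lemma piecewise (hN : IsMaximumMatching N) (hM : IsMaximumMatching M) {K : Set V}
    (hKN : ∀ ⦃x y⦄, N.Adj x y → x ∈ K → y ∈ K) (hKM : ∀ ⦃x y⦄, M.Adj x y → x ∈ K → y ∈ K) :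
    IsMaximumMatching (Subgraph.piecewise K N M) := by
  have hle := hN.ncard_verts_le (hM.1.piecewise hN.1 hKM hKN)
  rw [Subgraph.ncard_verts_piecewise,
    ← Set.ncard_inter_add_ncard_sdiff_eq_ncard N.verts K] at hle
  refine hM.of_ncard_verts_le (hN.1.piecewise hM.1 hKN hKM) ?_
  rw [Subgraph.ncard_verts_piecewise, ← Set.ncard_inter_add_ncard_sdiff_eq_ncard M.verts K]
  omega

/-- Rematching `v` to a free neighbour `a` frees its former partner `w`. -/
lemma exists_notMem_verts_of_adj (hM : IsMaximumMatching M) {a v w : V} (hvw : M.Adj v w)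
    (ha : a ∉ M.verts) (hav : G.Adj a v) :
    ∃ M' : G.Subgraph, IsMaximumMatching M' ∧ w ∉ M'.verts := by
  have hv : v ∉ (M.deleteVerts {v, w}).verts := fun h => h.2 (Set.mem_insert v {w})
  have ha' : a ∉ (M.deleteVerts {v, w}).verts := fun h => ha h.1
  have hM' := (hM.1.deleteVerts_pair hvw).sup_subgraphOfAdj hav ha' hv
  refine ⟨_, hM.of_ncard_verts_le hM' ?_, ?_⟩
  · rw [Subgraph.ncard_verts_sup_subgraphOfAdj hav ha' hv,
      Subgraph.ncard_verts_deleteVerts_pair hvw]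
  · have hwa : w ≠ a := fun h => ha (h ▸ M.edge_vert hvw.symm)
    simp [hwa, hvw.ne.symm]

theorem not_adj_of_notMem_verts (hG : G.Colorable 2) (hM : IsMaximumMatching M)
    (hN : IsMaximumMatching N) {a b : V} (ha : a ∉ M.verts) (hb : b ∉ N.verts) :
    ¬ G.Adj a b := by
  intro hab
  set K := {x | (M.spanningCoe ⊔ N.spanningCoe).Reachable b x}
  have hKM : ∀ ⦃x y⦄, M.Adj x y → x ∈ K → y ∈ K := fun _ _ hxy hx =>
    hx.trans (Adj.reachable (Or.inl hxy))
  have hKN : ∀ ⦃x y⦄, N.Adj x y → x ∈ K → y ∈ K := fun _ _ hxy hx =>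
    hx.trans (Adj.reachable (Or.inr hxy))
  by_cases haK : a ∈ K
  · exact hM.1.not_adj_of_reachable hG hN.1 hb ha haK hab.symm
  have hM' := hN.piecewise hM hKN hKM
  have ha' : a ∉ (Subgraph.piecewise K N M).verts := by
    simp [Subgraph.verts_piecewise, haK, ha]
  have hb' : b ∉ (Subgraph.piecewise K N M).verts := by
    simp [Subgraph.verts_piecewise, hb, K]
  have := hM'.ncard_verts_le (hM'.1.sup_subgraphOfAdj hab ha' hb')
  rw [Subgraph.ncard_verts_sup_subgraphOfAdj hab ha' hb'] at this
  omega

/-- Let `K` be the set of vertices reachable from `v` along `N` and `M₀ = M - {v, w}`; by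
bipartiteness `a ∉ K`. If `w ∈ K`, then `K` is closed under `M`, and `M` on `K`, `N` off `K` is
a maximum matching containing `vw` and missing `a`, so we rematch `v` to `a`. Otherwise, testing
the maximality of `N` against `M₀` on `K`, `N` off `K`, plus `av`, shows that `N` on `K`, `M₀`
off `K` is as large as `M`; it misses `w`. -/
theorem exists_notMem_verts_of_adj_of_notMem_verts (hG : G.Colorable 2)
    (hN : IsMaximumMatching N) {a v w : V} (ha : a ∉ N.verts) (hav : G.Adj a v)
    (hM : IsMaximumMatching M) (hvw : M.Adj v w) :
    ∃ M' : G.Subgraph, IsMaximumMatching M' ∧ w ∉ M'.verts := by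
  set M₀ := M.deleteVerts {v, w}
  have hM₀ : M₀.IsMatching := hM.1.deleteVerts_pair hvw
  have hv₀ : v ∉ M₀.verts := fun h => h.2 (Set.mem_insert v {w})
  set K := {x | (M₀.spanningCoe ⊔ N.spanningCoe).Reachable v x}
  have hKM₀ : ∀ ⦃x y⦄, M₀.Adj x y → x ∈ K → y ∈ K := fun _ _ hxy hx =>
    hx.trans (Adj.reachable (Or.inl hxy))
  have hKN : ∀ ⦃x y⦄, N.Adj x y → x ∈ K → y ∈ K := fun _ _ hxy hx =>
    hx.trans (Adj.reachable (Or.inr hxy))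
  have hvK : v ∈ K := Reachable.refl v
  have haK : a ∉ K := fun h => hM₀.not_adj_of_reachable hG hN.1 ha hv₀ h.symm hav
  by_cases hwK : w ∈ K
  · have hKM : ∀ ⦃x y⦄, M.Adj x y → x ∈ K → y ∈ K := by
      intro x y hxy hx
      by_cases hx' : x ∈ ({v, w} : Set V)
      · rcases hM.1.mem_pair_of_adj hvw hxy hx' with rfl | rfl <;> assumption
      have hy : y ∉ ({v, w} : Set V) := fun hy => hx' (hM.1.mem_pair_of_adj hvw hxy.symm hy)
      exact hKM₀ (Subgraph.deleteVerts_adj.mpr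
        ⟨M.edge_vert hxy, hx', M.edge_vert hxy.symm, hy, hxy⟩) hx
    refine (hM.piecewise hN hKM hKN).exists_notMem_verts_of_adj
      (Subgraph.piecewise_adj.mpr (Or.inl ⟨hvw, hvK, hwK⟩)) ?_ hav
    simp [Subgraph.verts_piecewise, haK, ha]
  · have ha' : a ∉ (Subgraph.piecewise K M₀ N).verts := by
      simp [Subgraph.verts_piecewise, haK, ha]
    have hv' : v ∉ (Subgraph.piecewise K M₀ N).verts := by
      simp [Subgraph.verts_piecewise, hvK, hv₀]
    have hle := hN.ncard_verts_le ((hM₀.piecewise hN.1 hKM₀ hKN).sup_subgraphOfAdj hav ha' hv')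
    rw [Subgraph.ncard_verts_sup_subgraphOfAdj hav ha' hv', Subgraph.ncard_verts_piecewise,
      ← Set.ncard_inter_add_ncard_sdiff_eq_ncard N.verts K] at hle
    refine ⟨_, hM.of_ncard_verts_le (hN.1.piecewise hM₀ hKN hKM₀) ?_, ?_⟩
    · rw [Subgraph.ncard_verts_piecewise, ← Subgraph.ncard_verts_deleteVerts_pair hvw,
        ← Set.ncard_inter_add_ncard_sdiff_eq_ncard M₀.verts K]
      omega
    · simp [Subgraph.verts_piecewise, hwK, M₀]

end IsMaximumMatching

namespace SimpleGraph

variable {V : Type*} [Fintype V] (G : SimpleGraph V)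

/-- The set `ℰ` of the theorem (`D(G)` in Gallai–Edmonds theory). -/
def inessentialVerts : Set V := {v | ∃ M : G.Subgraph, IsMaximumMatching M ∧ v ∉ M.verts}

/-- The set `𝒪` of the theorem (`A(G)` in Gallai–Edmonds theory). -/
def inessentialNeighbors : Set V :=
  {v | v ∉ G.inessentialVerts ∧ ∃ w ∈ G.inessentialVerts, G.Adj v w}

variable {G}

theorem isIndepSet_inessentialVerts (hG : G.Colorable 2) : G.IsIndepSet G.inessentialVerts :=
  fun _ ⟨_, hM, ha⟩ _ ⟨_, hN, hb⟩ _ => hM.not_adj_of_notMem_verts hG hN ha hb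

end SimpleGraph

namespace IsMaximumMatching

variable {V : Type*} [Fintype V] {G : SimpleGraph V} {M : G.Subgraph}

lemma mem_verts_of_notMem_inessentialVerts (hM : IsMaximumMatching M) {v : V}
    (hv : v ∉ G.inessentialVerts) : v ∈ M.verts :=
  not_not.mp fun h => hv ⟨M, hM, h⟩

theorem mem_inessentialVerts_iff (hG : G.Colorable 2) (hM : IsMaximumMatching M) {v w : V}
    (hvw : M.Adj v w) : v ∈ G.inessentialVerts ↔ w ∈ G.inessentialNeighbors :=
  ⟨fun hv => ⟨fun hw => isIndepSet_inessentialVerts hG hv hw hvw.ne hvw.adj_sub,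
    v, hv, hvw.adj_sub.symm⟩, fun ⟨_, _, ⟨_, hN, ha⟩, hwa⟩ =>
    hN.exists_notMem_verts_of_adj_of_notMem_verts hG ha hwa.symm hM hvw.symm⟩

theorem ncard_verts_eq (hG : G.Colorable 2) (hM : IsMaximumMatching M) :
    M.verts.ncard = 2 * G.inessentialNeighbors.ncard +
      (G.inessentialNeighbors ∪ G.inessentialVerts)ᶜ.ncard := by
  set E := G.inessentialVerts
  set O := G.inessentialNeighbors
  have hOE : O.ncard = (M.verts ∩ E).ncard :=
    hM.1.ncard_eq_of_adj_iff (fun _ hv => hM.mem_verts_of_notMem_inessentialVerts hv.1)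
      Set.inter_subset_left fun _ _ hxy => (hM.mem_inessentialVerts_iff hG hxy.symm).symm.trans
        ⟨fun h => ⟨M.edge_vert hxy.symm, h⟩, And.right⟩
  have hcompl : M.verts \ E = O ∪ (O ∪ E)ᶜ := by
    ext v
    simp only [Set.mem_sdiff, Set.mem_union, Set.mem_compl_iff, not_or]
    constructor
    · rintro ⟨-, hv⟩
      tauto
    · rintro (hv | ⟨-, hv⟩)
      · exact ⟨hM.mem_verts_of_notMem_inessentialVerts hv.1, hv.1⟩
      · exact ⟨hM.mem_verts_of_notMem_inessentialVerts hv, hv⟩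
  rw [← Set.ncard_inter_add_ncard_sdiff_eq_ncard M.verts E, ← hOE, hcompl,
    Set.ncard_union_eq (Set.disjoint_compl_right_iff_subset.mpr Set.subset_union_left)]
  ring

end IsMaximumMatching

/-- Dulmage–Mendelsohn decomposition: every finite bipartite graph `G` admits a
partition of its vertices into `O`, `E`, `U` such that (i) every maximum matching
uses only `U`–`U` and `E`–`O` edges, (ii) every maximum matching saturates all of
`U ∪ O`, (iii) twice the size of a maximum matching is `2|O| + |U|`, and
(iv) there are no `E`–`E` edges and no `E`–`U` edges in `G`. -/
theorem dulmage_mendelsohn {V : Type*} [Fintype V] (G : SimpleGraph V)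
    (hbip : G.Colorable 2) :
    ∃ O E U : Set V,
      (O ∪ E ∪ U = Set.univ) ∧ Disjoint O E ∧ Disjoint O U ∧ Disjoint E U ∧
      (∀ M : G.Subgraph, IsMaximumMatching M → ∀ v w, M.Adj v w →
        (v ∈ U ∧ w ∈ U) ∨ (v ∈ E ∧ w ∈ O) ∨ (v ∈ O ∧ w ∈ E)) ∧
      (∀ M : G.Subgraph, IsMaximumMatching M → U ∪ O ⊆ M.verts) ∧
      (∀ M : G.Subgraph, IsMaximumMatching M →
        2 * M.edgeSet.ncard = 2 * O.ncard + U.ncard) ∧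
      (∀ v ∈ E, ∀ w, (w ∈ E → ¬ G.Adj v w) ∧ (w ∈ U → ¬ G.Adj v w)) := by
  set E := G.inessentialVerts
  set O := G.inessentialNeighbors
  have hOE : Disjoint O E := Set.disjoint_left.mpr fun _ hv => hv.1
  refine ⟨O, E, (O ∪ E)ᶜ, Set.union_compl_self _, hOE,
    Set.disjoint_compl_right_iff_subset.mpr Set.subset_union_left,
    Set.disjoint_compl_right_iff_subset.mpr Set.subset_union_right,
    fun M hM v w hvw => ?_, fun M hM v hv => ?_,
    fun M hM => hM.1.ncard_verts.symm.trans (hM.ncard_verts_eq hbip),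
    fun v hv w => ⟨fun hw hvw => isIndepSet_inessentialVerts hbip hv hw hvw.ne hvw, ?_⟩⟩
  · have hvE := hM.mem_inessentialVerts_iff hbip hvw
    have hwE := hM.mem_inessentialVerts_iff hbip hvw.symm
    have hvO : v ∈ O → v ∉ E := And.left
    have hwO : w ∈ O → w ∉ E := And.left
    simp only [Set.mem_compl_iff, Set.mem_union]
    tauto
  · exact hM.mem_verts_of_notMem_inessentialVerts fun hvE =>
      hv.elim (fun hvU => hvU (Or.inr hvE)) fun hvO => hvO.1 hvE
  · intro hw hvw
    by_cases hwE : w ∈ E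
    · exact isIndepSet_inessentialVerts hbip hv hwE hvw.ne hvw
    · exact hw (Or.inl ⟨hwE, v, hv, hvw.symm⟩)
end

section
/- For a complete strict preference profile ≻, a perfect matching M is not Pareto optimal if and only if there exist k ≥ 2 and distinct agents a_1, …, a_k such that, with indices taken modulo k, M(a_{i+1}) ≻_{a_i} M(a_i) holds for every i ∈ {1,…,k}. -/
open Classical in
/-- A perfect matching `M` is not Pareto optimal iff there is a trading cycle:
`k ≥ 2` distinct agents `a_0, …, a_{k-1}` (given by an injective `f : ZMod k → Fin n`)
such that, cyclically, agent `f i` strictly prefers `M (f (i+1))` to `M (f i)`. -/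
theorem not_paretoOptimal_iff_exists_cycle {n : ℕ}
    (P : Fin n → (Fin n ≃ Fin n)) (M : Equiv.Perm (Fin n)) :
    ¬ ParetoOptimal P M ↔
      ∃ k : ℕ, 2 ≤ k ∧ ∃ f : ZMod k → Fin n, Function.Injective f ∧
        ∀ i : ZMod k, P (f i) (M (f (i + 1))) < P (f i) (M (f i)) := by
  rw [ParetoOptimal, not_not]
  constructor
  · rintro ⟨M', hweak, a₀, hstrict⟩
    -- σ a = the agent whose old house agent a receives
    set σ : Equiv.Perm (Fin n) := M'.trans M.symm with hσ
    have hMσ : ∀ a, M (σ a) = M' a := fun a => by simp [hσ]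
    have hne : ∀ a, σ a ≠ a → P a (M (σ a)) < P a (M a) := fun a h => by
      rw [hMσ]
      exact lt_of_le_of_ne (hweak a) (by
        intro heq
        exact h (M.injective (by rw [hMσ]; exact ((P a).injective heq)) ))
    have ha₀ : σ a₀ ≠ a₀ := by
      intro h
      have : M' a₀ = M a₀ := by rw [← hMσ, h]
      rw [this] at hstrict; exact lt_irrefl _ hstrict
    -- the orbit of a₀ under σ
    have hper : Function.IsPeriodicPt (⇑σ) (orderOf σ) a₀ := by
      show (⇑σ)^[orderOf σ] a₀ = a₀
      rw [Equiv.Perm.iterate_eq_pow, pow_orderOf_eq_one]; rfl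
    set k := Function.minimalPeriod (⇑σ) a₀ with hk
    have hkpos : 0 < k := hper.minimalPeriod_pos (orderOf_pos σ)
    have hkper : (⇑σ)^[k] a₀ = a₀ := Function.iterate_minimalPeriod
    have hk1 : k ≠ 1 := by
      intro h
      apply ha₀
      have := hkper
      rw [h] at this
      simpa using this
    have hk2 : 2 ≤ k := by omega
    haveI : NeZero k := ⟨by omega⟩
    refine ⟨k, hk2, fun i => (⇑σ)^[i.val] a₀, ?_, ?_⟩
    · intro i j hij
      have := Function.iterate_injOn_Iio_minimalPeriod (f := ⇑σ) (x := a₀)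
        (ZMod.val_lt i) (ZMod.val_lt j) hij
      exact ZMod.val_injective k this
    · intro i
      have hfix : ∀ m : ℕ, σ ((⇑σ)^[m] a₀) ≠ (⇑σ)^[m] a₀ := by
        intro m h
        apply ha₀
        have hall : ∀ l : ℕ, (⇑σ)^[l] ((⇑σ)^[m] a₀) = (⇑σ)^[m] a₀ := by
          intro l
          induction l with
          | zero => rfl
          | succ l ih => rw [Function.iterate_succ_apply', ih, h]
        have h1 : (⇑σ)^[k * (m / k + 1)] a₀ = a₀ :=
          (Function.isPeriodicPt_minimalPeriod (⇑σ) a₀).mul_const _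
        have h2 : k * (m / k + 1) = (k - m % k) + m := by
          rw [Nat.mul_succ]
          have := Nat.mod_lt m hkpos
          have := Nat.div_add_mod m k
          omega
        rw [h2, Function.iterate_add_apply, hall] at h1
        rw [h1] at h
        exact h
      have hval : ((i + 1 : ZMod k)).val = (i.val + 1) % k := by
        rw [ZMod.val_add, ZMod.val_one_eq_one_mod, Nat.mod_eq_of_lt (by omega : 1 < k)]
      have hstep : (⇑σ)^[(i + 1 : ZMod k).val] a₀ = σ ((⇑σ)^[i.val] a₀) := by
        rw [hval]
        show (⇑σ)^[(i.val + 1) % Function.minimalPeriod (⇑σ) a₀] a₀ = σ ((⇑σ)^[i.val] a₀)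
        rw [Function.iterate_mod_minimalPeriod_eq, Function.iterate_succ_apply']
      simp only []
      rw [hstep]
      exact hne _ (hfix i.val)
  · rintro ⟨k, hk2, f, hf, hcyc⟩
    haveI : NeZero k := ⟨by omega⟩
    set p : Fin n → Prop := fun x => x ∈ Set.range f with hp
    set e : ZMod k ≃ {x // p x} := Equiv.ofInjective f hf with he
    set σ : Equiv.Perm (Fin n) := (Equiv.addRight (1 : ZMod k)).extendDomain e with hσ
    have himg : ∀ i : ZMod k, σ (f i) = f (i + 1) := by
      intro i
      have : (e i : Fin n) = f i := rfl
      rw [← this, Equiv.Perm.extendDomain_apply_image]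
      rfl
    have hnot : ∀ a, a ∉ Set.range f → σ a = a := fun a ha =>
      Equiv.Perm.extendDomain_apply_not_subtype _ _ ha
    refine ⟨σ.trans M, ?_, ⟨f 0, ?_⟩⟩
    · intro a
      by_cases ha : a ∈ Set.range f
      · obtain ⟨i, rfl⟩ := ha
        simpa [himg i] using (hcyc i).le
      · simp [hnot a ha]
    · simpa [himg 0] using hcyc 0
end

section
/- Let each agent a be equipped with a strict partial order ≻'_a on the houses (set-compare partial preferences). A matching M is necessarily Pareto optimal if and only if there do not exist k ≥ 2 and distinct agents a_1, …, a_k such that, with indices taken modulo k, for every i ∈ {1,…,k} there exists a linear extension ≻_{a_i} of ≻'_{a_i} with M(a_{i+1}) ≻_{a_i} M(a_i) (equivalently, for every i it does not hold that M(a_i) ≻'_{a_i} M(a_{i+1})). -/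
/-- The complete profile `P` is a completion of the set-compare partial preferences
`R`, i.e. each `P a` induces a linear extension of the strict partial order `R a`. -/
def SCCompletion {n : ℕ} (R : Fin n → Fin n → Fin n → Prop)
    (P : Fin n → (Fin n ≃ Fin n)) : Prop :=
  ∀ a h h', R a h h' → P a h < P a h'

/-!
Write a competing matching as `M ∘ c` with `c` a permutation of the agents. Under a complete
profile, `M` is Pareto optimal iff every `c` that gives no agent a worse house is trivial. A strict
partial order can be linearly extended so that any house not forced below another is ranked weakly
above it, and the agents' completions are independent, so `M` is necessarily Pareto optimal iff
every `c` with `¬ M a ≻'_a M (c a)` for all `a` is trivial. A nontrivial such `c` moves some agent,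
whose orbit is a cycle as in the statement; conversely, rotating a cycle and fixing everybody else
is such a `c`.
-/

open Function Equiv

theorem isStrictOrder_lt_or_le_and_le {α : Type*} [PartialOrder α] {x y : α} (hyx : ¬ y ≤ x) :
    IsStrictOrder α (fun a b => a < b ∨ a ≤ x ∧ y ≤ b) where
  irrefl a := by
    rintro (h | ⟨hax, hya⟩)
    · exact h.false
    · exact hyx (hya.trans hax)
  trans a b c := by
    rintro (hab | ⟨hax, hyb⟩) (hbc | ⟨hbx, hyc⟩)
    · exact Or.inl (hab.trans hbc)
    · exact Or.inr ⟨hab.le.trans hbx, hyc⟩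
    · exact Or.inr ⟨hax, hyb.trans hbc.le⟩
    · exact (hyx (hyb.trans hbx)).elim

theorem exists_equiv_fin_of_isStrictOrder {α : Type*} [Fintype α] (r : α → α → Prop)
    [IsStrictOrder α r] {n : ℕ} (hn : Fintype.card α = n) :
    ∃ e : α ≃ Fin n, ∀ a b, r a b → e a < e b := by
  let := partialOrderOfSO r
  let : Fintype (LinearExtension α) := inferInstanceAs (Fintype α)
  let e := Fintype.orderIsoFinOfCardEq (LinearExtension α) hn
  refine ⟨e.symm.toEquiv, fun a b hab => e.symm.strictMono ?_⟩
  refine lt_of_le_of_ne (toLinearExtension.monotone (Or.inr hab)) ?_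
  rintro rfl
  exact irrefl_of r a hab

theorem exists_equiv_fin_of_isStrictOrder_of_not_rel {α : Type*} [Fintype α]
    {r : α → α → Prop} [IsStrictOrder α r] {n : ℕ} (hn : Fintype.card α = n) {x y : α}
    (hyx : ¬ r y x) : ∃ e : α ≃ Fin n, (∀ a b, r a b → e a < e b) ∧ e x ≤ e y := by
  obtain rfl | hxy := eq_or_ne x y
  · obtain ⟨e, he⟩ := exists_equiv_fin_of_isStrictOrder r hn
    exact ⟨e, he, le_rfl⟩
  let := partialOrderOfSO r
  have := isStrictOrder_lt_or_le_and_le (x := x) (y := y) (by rintro (rfl | h) <;> contradiction)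
  obtain ⟨e, he⟩ := exists_equiv_fin_of_isStrictOrder (fun a b => a < b ∨ a ≤ x ∧ y ≤ b) hn
  exact ⟨e, fun a b h => he a b (Or.inl h), (he x y (Or.inr ⟨le_rfl, le_rfl⟩)).le⟩

theorem Equiv.Perm.exists_injective_zmod_of_apply_ne {α : Type*} [Finite α] {c : Perm α}
    {a : α} (h : c a ≠ a) :
    ∃ k, 2 ≤ k ∧ ∃ f : ZMod k → α, Injective f ∧ ∀ i, f (i + 1) = c (f i) := by
  have hk0 : minimalPeriod (c • ·) a ≠ 0 := by
    rw [← MulAction.period_eq_minimalPeriod]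
    exact (MulAction.period_pos_of_orderOf_pos (orderOf_pos c) a).ne'
  have hk1 : minimalPeriod (c • ·) a ≠ 1 := by
    rwa [← MulAction.period_eq_minimalPeriod, Ne, MulAction.period_eq_one_iff]
  refine ⟨_, by omega, fun i => ((MulAction.orbitZPowersEquiv c a).symm i : α),
    Subtype.val_injective.comp (MulAction.orbitZPowersEquiv c a).symm.injective, fun i => ?_⟩
  obtain ⟨m, rfl⟩ := ZMod.intCast_surjective i
  dsimp only
  rw [← Int.cast_one, ← Int.cast_add, MulAction.orbitZPowersEquiv_symm_apply',
    MulAction.orbitZPowersEquiv_symm_apply', ← mul_self_zpow, mul_smul]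
  rfl

theorem Equiv.Perm.exists_ne_one_forall_rel_iff_exists_cycle {α : Type*} [Finite α]
    {Q : α → α → Prop} (hQ : ∀ a, Q a a) :
    (∃ c : Perm α, c ≠ 1 ∧ ∀ a, Q a (c a)) ↔
      ∃ k, 2 ≤ k ∧ ∃ f : ZMod k → α, Injective f ∧ ∀ i, Q (f i) (f (i + 1)) := by
  classical
  constructor
  · rintro ⟨c, hc1, hQc⟩
    obtain ⟨a, ha⟩ := not_forall.mp (mt Equiv.Perm.ext hc1)
    obtain ⟨k, hk, f, hf, hfc⟩ := exists_injective_zmod_of_apply_ne ha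
    exact ⟨k, hk, f, hf, fun i => hfc i ▸ hQc (f i)⟩
  · rintro ⟨k, hk, f, hf, hQf⟩
    have : Fact (1 < k) := ⟨hk⟩
    let c : Perm α := (Equiv.addRight (1 : ZMod k)).extendDomain (Equiv.ofInjective f hf)
    have hc_range (i : ZMod k) : c (f i) = f (i + 1) :=
      (Equiv.addRight (1 : ZMod k)).extendDomain_apply_image (Equiv.ofInjective f hf) i
    refine ⟨c, fun h1 => ?_, fun a => ?_⟩
    · have := hc_range 0
      rw [h1, zero_add, Perm.one_apply] at this
      exact zero_ne_one (hf this)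
    · by_cases ha : a ∈ Set.range f
      · obtain ⟨i, rfl⟩ := ha
        exact hc_range i ▸ hQf i
      · rw [Perm.extendDomain_apply_not_subtype _ _ ha]
        exact hQ a

theorem paretoOptimal_iff {n : ℕ} {P : Fin n → (Fin n ≃ Fin n)} {M : Perm (Fin n)} :
    ParetoOptimal P M ↔ ∀ c : Perm (Fin n), (∀ a, P a (M (c a)) ≤ P a (M a)) → c = 1 := by
  constructor
  · intro hPO c hc
    by_contra hc1
    obtain ⟨a, ha⟩ := not_forall.mp (mt Perm.ext hc1)
    exact hPO ⟨c.trans M, hc, a, (hc a).lt_of_ne ((P a).injective.ne (M.injective.ne ha))⟩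
  · rintro h ⟨M', hle, a, hlt⟩
    have hM' : M⁻¹ * M' = 1 := h _ fun a => by simpa using hle a
    rw [← inv_mul_eq_one.mp hM'] at hlt
    exact hlt.false

theorem forall_scCompletion_paretoOptimal_iff {n : ℕ} {R : Fin n → Fin n → Fin n → Prop}
    (hR : ∀ a, IsStrictOrder (Fin n) (R a)) (M : Perm (Fin n)) :
    (∀ P, SCCompletion R P → ParetoOptimal P M) ↔
      ∀ c : Perm (Fin n), (∀ a, ¬ R a (M a) (M (c a))) → c = 1 := by
  constructor
  · intro h c hc
    choose P hPR hPc using fun a =>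
      exists_equiv_fin_of_isStrictOrder_of_not_rel (r := R a) (Fintype.card_fin n) (hc a)
    exact paretoOptimal_iff.mp (h P hPR) c hPc
  · intro h P hP
    exact paretoOptimal_iff.mpr fun c hc => h c fun a hRa => (hc a).not_gt (hP a _ _ hRa)

/-- A matching `M` is necessarily Pareto optimal for set-compare partial preferences
`R` iff there is no cycle of `k ≥ 2` distinct agents `a_0, …, a_{k-1}` (an injective
`f : ZMod k → Fin n`) such that, cyclically, for every `i` it does not hold that
`M (f i) ≻'_{f i} M (f (i+1))` (equivalently, some linear extension of `≻'_{f i}`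
places `M (f (i+1))` above `M (f i)`). -/
theorem npo_setcompare_iff_no_cycle {n : ℕ}
    (R : Fin n → Fin n → Fin n → Prop)
    (hR : ∀ a, IsStrictOrder (Fin n) (R a))
    (M : Equiv.Perm (Fin n)) :
    (∀ P : Fin n → (Fin n ≃ Fin n), SCCompletion R P → ParetoOptimal P M) ↔
      ¬ ∃ k : ℕ, 2 ≤ k ∧ ∃ f : ZMod k → Fin n, Function.Injective f ∧
          ∀ i : ZMod k, ¬ R (f i) (M (f i)) (M (f (i + 1))) := by
  rw [forall_scCompletion_paretoOptimal_iff hR M,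
    ← Perm.exists_ne_one_forall_rel_iff_exists_cycle (Q := fun a b => ¬ R a (M a) (M b))
      fun a => (hR a).irrefl (M a)]
  simp only [not_exists, not_and]
  exact forall_congr' fun c => not_imp_not.symm
end

section
/- Let partial preferences in the hybrid-query model be given. A matching M is necessarily Pareto optimal if and only if there do not exist k ≥ 2 and distinct agents a_1, …, a_k such that, with indices taken modulo k, for every i ∈ {1,…,k} there exists a completion ≻ of the partial preferences in which M(a_{i+1}) ≻_{a_i} M(a_i). -/
/-- `P` is a completion of the hybrid-query partial preferences `(rev, rnk)`. -/
def HQCompletion {n : ℕ} (rev : Fin n → Finset (Fin n)) (rnk : Fin n → Fin n → Fin n)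
    (P : Fin n → (Fin n ≃ Fin n)) : Prop :=
  ∀ a, ∀ h ∈ rev a, P a h = rnk a h

/-- A matching `M` is necessarily Pareto optimal for hybrid-query partial preferences
iff there is no cycle of `k ≥ 2` distinct agents `a_0, …, a_{k-1}` (an injective
`f : ZMod k → Fin n`) such that, cyclically, for every `i` some completion makes
agent `f i` strictly prefer `M (f (i+1))` to `M (f i)`. -/
theorem npo_hybrid_iff_no_cycle {n : ℕ}
    (rev : Fin n → Finset (Fin n)) (rnk : Fin n → Fin n → Fin n)
    (hinj : ∀ a, Set.InjOn (rnk a) (rev a))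
    (M : Equiv.Perm (Fin n)) :
    (∀ P : Fin n → (Fin n ≃ Fin n), HQCompletion rev rnk P → ParetoOptimal P M) ↔
      ¬ ∃ k : ℕ, 2 ≤ k ∧ ∃ f : ZMod k → Fin n, Function.Injective f ∧
          ∀ i : ZMod k, ∃ P : Fin n → (Fin n ≃ Fin n), HQCompletion rev rnk P ∧
            P (f i) (M (f (i + 1))) < P (f i) (M (f i)) := by
  classical
  constructor
  · -- NPO → no cycle
    rintro hNPO ⟨k, hk, f, hfinj, hcyc⟩
    haveI : NeZero k := ⟨by omega⟩
    -- choose completions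
    choose Q hQcomp hQlt using hcyc
    -- build a single completion
    set P : Fin n → (Fin n ≃ Fin n) := fun a =>
      if h : ∃ i, f i = a then Q h.choose a else Q 0 a with hPdef
    have hPcomp : HQCompletion rev rnk P := by
      intro a h hh
      by_cases hex : ∃ i, f i = a
      · simp only [hPdef, dif_pos hex]; exact hQcomp _ a h hh
      · simp only [hPdef, dif_neg hex]; exact hQcomp 0 a h hh
    have hPf : ∀ i : ZMod k, P (f i) = Q i (f i) := by
      intro i
      have hex : ∃ j, f j = f i := ⟨i, rfl⟩
      have : hex.choose = i := hfinj hex.choose_spec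
      simp only [hPdef, dif_pos hex, this]
    -- the improving matching
    set σ : Equiv.Perm (Fin n) :=
      (Equiv.addRight (1 : ZMod k)).viaEmbedding ⟨f, hfinj⟩ with hσ
    have hσf : ∀ i : ZMod k, σ (f i) = f (i + 1) := fun i =>
      Equiv.Perm.viaEmbedding_apply _ ⟨f, hfinj⟩ i
    have hσo : ∀ a, a ∉ Set.range f → σ a = a := fun a ha =>
      Equiv.Perm.viaEmbedding_apply_of_notMem _ ⟨f, hfinj⟩ a ha
    refine hNPO P hPcomp ⟨M * σ, ?_, ⟨f 0, ?_⟩⟩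
    · intro a
      by_cases hex : ∃ i, f i = a
      · obtain ⟨i, rfl⟩ := hex
        simp only [Equiv.Perm.mul_apply, hσf, hPf]
        exact (hQlt i).le
      · simp [Equiv.Perm.mul_apply, hσo a (by simpa [Set.range] using hex)]
    · simp only [Equiv.Perm.mul_apply, hσf, hPf]
      exact hQlt 0
  · -- no cycle → NPO
    intro hnc P hP hdom
    obtain ⟨M', hle, a, ha⟩ := hdom
    apply hnc
    set τ : Equiv.Perm (Fin n) := M⁻¹ * M' with hτ
    have hMτ : ∀ x, M (τ x) = M' x := by
      intro x; simp [hτ, Equiv.Perm.mul_apply]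
    have hτa : τ a ≠ a := by
      intro h
      have : M' a = M a := by rw [← hMτ, h]
      rw [this] at ha; exact lt_irrefl _ ha
    have hsupp : ∀ m : ℕ, τ ((⇑τ)^[m] a) ≠ (⇑τ)^[m] a := by
      intro m h
      apply hτa
      have hcomm : τ ((⇑τ)^[m] a) = (⇑τ)^[m] (τ a) := (Function.Commute.iterate_self ⇑τ m a).symm
      rw [hcomm] at h
      exact (τ.injective.iterate m) h
    have hper : Function.IsPeriodicPt ⇑τ (orderOf τ) a := by
      show (⇑τ)^[orderOf τ] a = a
      rw [Equiv.Perm.iterate_eq_pow τ (orderOf τ), pow_orderOf_eq_one]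
      rfl
    set k : ℕ := Function.minimalPeriod ⇑τ a with hkdef
    have hkpos : 0 < k := hper.minimalPeriod_pos (orderOf_pos τ)
    have hk1 : k ≠ 1 := fun h => hτa (Function.minimalPeriod_eq_one_iff_isFixedPt.mp h)
    have hk2 : 2 ≤ k := by omega
    haveI : NeZero k := ⟨by omega⟩
    haveI : Fact (1 < k) := ⟨by omega⟩
    refine ⟨k, hk2, fun i => τ^[i.val] a, ?_, ?_⟩
    · intro i j h
      apply ZMod.val_injective k
      exact Function.iterate_injOn_Iio_minimalPeriod (ZMod.val_lt i) (ZMod.val_lt j) h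
    · intro i
      have hstep : τ^[(i + 1 : ZMod k).val] a = τ (τ^[i.val] a) := by
        have hv : (i + 1 : ZMod k).val = (i.val + 1) % k := by
          rw [ZMod.val_add, ZMod.val_one]
        rcases Nat.lt_or_ge (i.val + 1) k with hlt | hge
        · rw [hv, Nat.mod_eq_of_lt hlt, Function.iterate_succ_apply']
        · have hik : i.val + 1 = k := by have := ZMod.val_lt i; omega
          have h2 : τ ((⇑τ)^[i.val] a) = (⇑τ)^[i.val + 1] a :=
            (Function.iterate_succ_apply' ⇑τ i.val a).symm
          have h3 : (⇑τ)^[i.val + 1] a = a := by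
            rw [hik, hkdef]; exact Function.iterate_minimalPeriod
          rw [hv, hik, Nat.mod_self, h2, h3]
          rfl
      refine ⟨P, hP, ?_⟩
      show P ((⇑τ)^[i.val] a) (M ((⇑τ)^[(i + 1 : ZMod k).val] a)) <
        P ((⇑τ)^[i.val] a) (M ((⇑τ)^[i.val] a))
      rw [hstep, hMτ]
      have hne : M' (τ^[i.val] a) ≠ M (τ^[i.val] a) := by
        intro h
        exact hsupp i.val (M.injective (by rw [hMτ, h]))
      exact lt_of_le_of_ne (hle _) (fun h => hne ((P _).injective h))
end

section
/- Let partial preferences in the hybrid-query model be given and let M be a necessarily Pareto optimal matching. Then there exists a permutation σ of the agents such that for every i ∈ {1,…,n}: if M(σ(i)) ∈ rev(σ(i)) then |rev(σ(i))| ≥ min( rank'(σ(i), M(σ(i))), n − i ), and if M(σ(i)) ∉ rev(σ(i)) then |rev(σ(i))| ≥ n − i. -/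
/-
Say that `a` possibly envies `b` if some completion of `a`'s revealed ranks puts `M b` above
`M a`. Along a cycle of possible envy, the completions witnessing it make rotating the houses
a Pareto improvement, so for an NPO matching possible envy is well-founded and the agents can
be listed so that everyone possibly envies only agents listed earlier. If `σ i` has revealed
fewer houses than the rank of `M (σ i)`, or `M (σ i)` is unrevealed, then `σ i` possibly envies
every other agent whose house `σ i` has not revealed: rank that house at the least free rank.
So at most `#rev (σ i) + 1` agents are not listed before `σ i`.
-/

open Finset Function Equiv

theorem Set.InjOn.exists_equiv_extend {α β : Type*} [Fintype α] [Fintype β]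
    (hcard : Fintype.card α = Fintype.card β) {s : Set α} {f : α → β} (hf : s.InjOn f) :
    ∃ g : α ≃ β, ∀ x ∈ s, g x = f x := by
  have hmaps : s.MapsTo f (Finset.univ : Finset β) := fun _ _ =>
    Finset.mem_coe.2 (Finset.mem_univ _)
  obtain ⟨g, hg⟩ := hmaps.exists_equiv_extend_of_card_eq (by rwa [Finset.card_univ]) hf
  exact ⟨g.trans (subtypeUnivEquiv Finset.mem_univ), hg⟩

theorem Function.exists_iterate_mem_periodicPts {α : Type*} [Finite α] (f : α → α) (x : α) :
    ∃ m, f^[m] x ∈ periodicPts f := by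
  obtain ⟨i, j, heq, hne⟩ : ∃ i j, f^[i] x = f^[j] x ∧ i ≠ j := by
    simpa [Injective] using not_injective_infinite_finite (f^[·] x)
  wlog hij : i < j generalizing i j
  · exact this j i heq.symm hne.symm (by omega)
  refine ⟨i, mk_mem_periodicPts (n := j - i) (by omega) ?_⟩
  change f^[j - i] (f^[i] x) = f^[i] x
  rw [← iterate_add_apply, Nat.sub_add_cancel hij.le, heq]

theorem exists_perm_ne_one_of_forall_exists_rel {α : Type*} [Finite α] {R : α → α → Prop}
    (hR : ∀ a, ¬ R a a) {V : Set α} (hV : V.Nonempty)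
    (hsucc : ∀ a ∈ V, ∃ b ∈ V, R a b) :
    ∃ g : Perm α, g ≠ 1 ∧ ∀ a, g a ≠ a → R a (g a) := by
  classical
  choose! f hfV hfR using hsucc
  set F := V.piecewise f id
  have hFV : Set.MapsTo F V V := fun a ha => by
    simpa only [F, Set.piecewise_eq_of_mem _ _ _ ha] using hfV a ha
  have hFR : ∀ a, F a ≠ a → R a (F a) := fun a ha => by
    by_cases haV : a ∈ V
    · simpa only [F, Set.piecewise_eq_of_mem _ _ _ haV] using hfR a haV
    · exact absurd (Set.piecewise_eq_of_notMem _ _ _ haV) ha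
  set g : Perm α := Perm.ofSubtype ((bijOn_periodicPts F).equiv F)
  have hg : ∀ a ∈ periodicPts F, g a = F a := fun a ha => Perm.ofSubtype_apply_of_mem _ ha
  refine ⟨g, fun hg1 => ?_, fun a ha => ?_⟩
  · obtain ⟨x, hx⟩ := hV
    obtain ⟨m, hm⟩ := exists_iterate_mem_periodicPts F x
    have hy : F^[m] x ∈ V := hFV.iterate m hx
    have hFy : F (F^[m] x) = f (F^[m] x) := Set.piecewise_eq_of_mem _ _ _ hy
    have hRy := hfR _ hy
    rw [← hFy, ← hg _ hm, hg1, Perm.one_apply] at hRy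
    exact hR _ hRy
  · by_cases hper : a ∈ periodicPts F
    · rw [hg a hper] at ha ⊢
      exact hFR a ha
    · exact absurd (Perm.ofSubtype_apply_of_not_mem _ hper) ha

theorem exists_perm_lt_of_wellFounded {n : ℕ} {r : Fin n → Fin n → Prop}
    (hr : WellFounded r) :
    ∃ σ : Perm (Fin n), ∀ i j, r (σ i) (σ j) → i < j := by
  have : IsWellFounded (Fin n) r := ⟨hr⟩
  refine ⟨Tuple.sort (IsWellFounded.rank r), fun i j hij => ?_⟩
  by_contra! hji
  exact (IsWellFounded.rank_lt_of_rel hij).not_ge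
    (Tuple.monotone_sort (IsWellFounded.rank r) hji)

def PossiblyPrefers {n : ℕ} (s : Finset (Fin n)) (r : Fin n → Fin n) (h h' : Fin n) : Prop :=
  ∃ e : Fin n ≃ Fin n, (∀ x ∈ s, e x = r x) ∧ e h < e h'

theorem possiblyPrefers_of_notMem {n : ℕ} {s : Finset (Fin n)} {r : Fin n → Fin n}
    (hr : Set.InjOn r s) {h h' : Fin n} (hh : h ∉ s) (hne : h ≠ h')
    (hshort : h' ∈ s → #s ≤ r h') : PossiblyPrefers s r h h' := by
  classical
  set free := (s.image r)ᶜ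
  have hfree : free.Nonempty := by
    rw [← card_pos, card_compl, card_image_of_injOn hr]
    have := card_lt_univ_of_notMem hh
    omega
  set u := free.min' hfree
  have hu : u ∉ s.image r := mem_compl.1 (free.min'_mem hfree)
  have hupd : Set.InjOn (update r h u) (insert h s) := by
    rw [Set.injOn_insert (mem_coe.not.2 hh)]
    refine ⟨hr.congr fun x hx => (update_of_ne (ne_of_mem_of_not_mem hx hh) _ _).symm, ?_⟩
    rintro ⟨x, hx, hxu⟩
    rw [update_self, update_of_ne (ne_of_mem_of_not_mem hx hh)] at hxu
    exact hu (hxu ▸ mem_image_of_mem r hx)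
  obtain ⟨e, he⟩ := hupd.exists_equiv_extend (by rfl)
  have hes : ∀ x ∈ s, e x = r x := fun x hx => by
    rw [he x (Set.mem_insert_of_mem h hx), update_of_ne (ne_of_mem_of_not_mem hx hh)]
  have heh : e h = u := by rw [he h (Set.mem_insert h _), update_self]
  refine ⟨e, hes, heh ▸ ?_⟩
  -- `h` gets the least free rank `u`; if `h' ∈ s`, some free rank lies below `r h'`
  -- because `#s ≤ r h'`.
  by_cases h's : h' ∈ s
  · obtain ⟨v, hv, hvr⟩ := exists_mem_notMem_of_card_lt_card
      (s := (s.image r).erase (r h')) (t := Iio (r h')) <| by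
        rw [card_erase_of_mem (mem_image_of_mem r h's), card_image_of_injOn hr, Fin.card_Iio]
        have := hshort h's
        have := card_pos.2 ⟨h', h's⟩
        omega
    have hvfree : v ∈ free :=
      mem_compl.2 fun hv' => hvr (mem_erase.2 ⟨(mem_Iio.1 hv).ne, hv'⟩)
    rw [hes h' h's]
    exact (free.min'_le v hvfree).trans_lt (mem_Iio.1 hv)
  · have he'free : e h' ∈ free := mem_compl.2 fun hmem => by
      obtain ⟨x, hx, hxe⟩ := mem_image.1 hmem
      exact h's (e.injective (hxe ▸ hes x hx) ▸ hx)
    exact (free.min'_le _ he'free).lt_of_ne (heh ▸ e.injective.ne hne :)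

def PossiblyEnvies {n : ℕ} (rev : Fin n → Finset (Fin n)) (rnk : Fin n → Fin n → Fin n)
    (M : Equiv.Perm (Fin n)) (a b : Fin n) : Prop :=
  PossiblyPrefers (rev a) (rnk a) (M b) (M a)

theorem not_possiblyEnvies_self {n : ℕ} (rev : Fin n → Finset (Fin n))
    (rnk : Fin n → Fin n → Fin n) (M : Equiv.Perm (Fin n)) (a : Fin n) :
    ¬ PossiblyEnvies rev rnk M a a :=
  fun ⟨_, _, hlt⟩ => hlt.false

theorem exists_not_paretoOptimal_of_perm {n : ℕ} {rev : Fin n → Finset (Fin n)}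
    {rnk : Fin n → Fin n → Fin n} (hinj : ∀ a, Set.InjOn (rnk a) (rev a)) (M : Perm (Fin n))
    {g : Perm (Fin n)} (hg : g ≠ 1)
    (henvy : ∀ a, g a ≠ a → PossiblyEnvies rev rnk M a (g a)) :
    ∃ P, HQCompletion rev rnk P ∧ ¬ ParetoOptimal P M := by
  have hrow : ∀ a, ∃ e : Fin n ≃ Fin n, (∀ h ∈ rev a, e h = rnk a h) ∧
      e (M (g a)) ≤ e (M a) ∧ (g a ≠ a → e (M (g a)) < e (M a)) := fun a => by
    by_cases ha : g a = a
    · obtain ⟨e, he⟩ := (hinj a).exists_equiv_extend rfl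
      exact ⟨e, he, by rw [ha], fun hmoved => (hmoved ha).elim⟩
    · obtain ⟨e, he, hlt⟩ := henvy a ha
      exact ⟨e, he, hlt.le, fun _ => hlt⟩
  choose P hPrev hPle hPlt using hrow
  obtain ⟨a, ha⟩ : ∃ a, g a ≠ a := by
    by_contra! hfix
    exact hg (Equiv.ext hfix)
  exact ⟨P, hPrev, fun hPO => hPO ⟨g.trans M, hPle, a, hPlt a ha⟩⟩

theorem wellFounded_possiblyEnvies {n : ℕ} {rev : Fin n → Finset (Fin n)}
    {rnk : Fin n → Fin n → Fin n} (hinj : ∀ a, Set.InjOn (rnk a) (rev a)) {M : Perm (Fin n)}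
    (hNPO : ∀ P : Fin n → (Fin n ≃ Fin n), HQCompletion rev rnk P → ParetoOptimal P M) :
    WellFounded (fun b a => PossiblyEnvies rev rnk M a b) := by
  rw [WellFounded.wellFounded_iff_has_min]
  intro V hV
  by_contra! hcycle
  obtain ⟨g, hg, henvy⟩ :=
    exists_perm_ne_one_of_forall_exists_rel (not_possiblyEnvies_self rev rnk M) hV hcycle
  obtain ⟨P, hP, hnot⟩ := exists_not_paretoOptimal_of_perm hinj M hg henvy
  exact hnot (hNPO P hP)

theorem le_card_add_one_add_of_forall_exists_lt {n : ℕ} (s : Finset (Fin n))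
    (M σ : Perm (Fin n)) (a i : Fin n) (h : ∀ b, M b ∉ s → b ≠ a → ∃ j < i, σ j = b) :
    n ≤ #s + 1 + i := by
  classical
  set cover : Finset (Fin n) :=
    s.map M.symm.toEmbedding ∪ {a} ∪ (Iio i).map σ.toEmbedding
  have hcover : (univ : Finset (Fin n)) ⊆ cover := by
    intro b _
    by_cases hb : M b ∈ s
    · simp [cover, hb]
    by_cases hba : b = a
    · simp [cover, hba]
    obtain ⟨j, hj, rfl⟩ := h b hb hba
    simp [cover, hj]
  calc n = #(univ : Finset (Fin n)) := (card_fin n).symm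
    _ ≤ #cover := card_le_card hcover
    _ ≤ #s + 1 + i := by
      grw [card_union_le, card_union_le]
      simp

/-- If `M` is necessarily Pareto optimal for hybrid-query partial preferences, then
there is a permutation `σ` of the agents such that for every position `i`:
if `M (σ i)` is revealed then agent `σ i` has revealed at least
`min (rank'(σ i, M (σ i))) (n - i₁)` houses (with 1-based rank and position), and
otherwise at least `n - i₁` houses. -/
theorem npo_lower_bound_on_revealed {n : ℕ}
    (rev : Fin n → Finset (Fin n)) (rnk : Fin n → Fin n → Fin n)
    (hinj : ∀ a, Set.InjOn (rnk a) (rev a))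
    (M : Equiv.Perm (Fin n))
    (hNPO : ∀ P : Fin n → (Fin n ≃ Fin n), HQCompletion rev rnk P → ParetoOptimal P M) :
    ∃ σ : Equiv.Perm (Fin n), ∀ i : Fin n,
      (M (σ i) ∈ rev (σ i) →
        min ((rnk (σ i) (M (σ i)) : ℕ) + 1) (n - 1 - (i : ℕ)) ≤ (rev (σ i)).card) ∧
      (M (σ i) ∉ rev (σ i) → n - 1 - (i : ℕ) ≤ (rev (σ i)).card) := by
  obtain ⟨σ, hσ⟩ := exists_perm_lt_of_wellFounded (wellFounded_possiblyEnvies hinj hNPO)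
  refine ⟨σ, fun i => ?_⟩
  have hcount : (M (σ i) ∈ rev (σ i) → #(rev (σ i)) ≤ rnk (σ i) (M (σ i))) →
      n ≤ #(rev (σ i)) + 1 + i := fun hshort =>
    le_card_add_one_add_of_forall_exists_lt (rev (σ i)) M σ (σ i) i fun b hb hbi => by
      obtain ⟨j, rfl⟩ := σ.surjective b
      exact ⟨j, hσ j i (possiblyPrefers_of_notMem (hinj _) hb (M.injective.ne hbi) hshort), rfl⟩
  refine ⟨fun hmem => ?_, fun hnot => ?_⟩
  · by_cases hshort : #(rev (σ i)) ≤ rnk (σ i) (M (σ i))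
    · have := hcount fun _ => hshort
      omega
    · omega
  · have := hcount (absurd · hnot)
    omega
end

section
/- Let partial preferences rank' in the hybrid-query model be given and suppose that for every agent a there is at least one rank not assigned to any house of rev(a); let ℓ_a denote the largest such unassigned rank. Define maxrank(a,h) = rank'(a,h) if h ∈ rev(a) and maxrank(a,h) = ℓ_a otherwise. If M is a necessarily rank-maximal matching for rank', then M is rank-maximal in the instance with (possibly tied) rank function maxrank, i.e., the signature vector (s_1,…,s_n) with s_l = |{a : maxrank(a, M(a)) = l}| is lexicographically maximal over all matchings. -/
/-- The signature of a matching `M` under a (possibly tied) rank function `r`: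
`sig r M l` is the number of agents matched to a house they rank `l`. -/
noncomputable def sig {n : ℕ} (r : Fin n → Fin n → ℕ) (M : Equiv.Perm (Fin n)) (l : ℕ) : ℕ :=
  {a : Fin n | r a (M a) = l}.ncard

/-- `SigDom s t`: signature `s` lexicographically dominates signature `t`. -/
def SigDom (s t : ℕ → ℕ) : Prop :=
  ∃ l : ℕ, (∀ k < l, s k = t k) ∧ t l < s l

/-- `M` is rank-maximal w.r.t. the rank function `r`: its signature is
lexicographically maximal over all matchings. -/
def RankMaximal {n : ℕ} (r : Fin n → Fin n → ℕ) (M : Equiv.Perm (Fin n)) : Prop :=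
  ∀ M' : Equiv.Perm (Fin n), ¬ SigDom (sig r M') (sig r M)

/-!
Suppose a matching `M'` beats `M` under `maxrank`. Extend each agent's revealed ranks to a
full ranking that puts `M a` at rank `L a` whenever `M a` is unrevealed; this is possible
because `L a` is unassigned. Under this completion `M` has the same signature as under
`maxrank`, while every house gets a rank at most its `maxrank` (an unrevealed house receives
an unassigned rank, hence one `≤ L a`), so `M'` does at least as well as under `maxrank`.
Thus `M'` beats `M` under the completion, contradicting necessary rank-maximality.
-/

theorem Set.InjOn.exists_perm_eqOn {α : Type*} [Fintype α] {s : Set α} {f : α → α}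
    (hf : s.InjOn f) : ∃ Q : Equiv.Perm α, s.EqOn Q f := by
  obtain ⟨g, hg⟩ := Set.MapsTo.exists_equiv_extend_of_card_eq (t := Finset.univ)
    Finset.card_univ.symm (f := f) (fun x _ => Finset.mem_coe.2 (Finset.mem_univ (f x))) hf
  exact ⟨g.trans (Equiv.subtypeUnivEquiv Finset.mem_univ), hg⟩

theorem Set.InjOn.exists_perm_eqOn_apply_eq {α : Type*} [Fintype α] [DecidableEq α]
    {s : Set α} {f : α → α} (hf : s.InjOn f) {x y : α} (hx : x ∉ s) (hy : ∀ z ∈ s, f z ≠ y) :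
    ∃ Q : Equiv.Perm α, s.EqOn Q f ∧ Q x = y := by
  have hinj : (insert x s).InjOn (Function.update f x y) := by
    refine (Set.injOn_insert hx).2 ⟨hf.congr fun z hz => ?_, ?_⟩
    · exact (Function.update_of_ne (ne_of_mem_of_not_mem hz hx) _ _).symm
    · rintro ⟨z, hz, hzy⟩
      rw [Function.update_of_ne (ne_of_mem_of_not_mem hz hx), Function.update_self] at hzy
      exact hy z hz hzy
  obtain ⟨Q, hQ⟩ := hinj.exists_perm_eqOn
  refine ⟨Q, fun z hz => ?_, by simpa using hQ (Set.mem_insert x s)⟩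
  rw [hQ (Set.mem_insert_of_mem x hz), Function.update_of_ne (ne_of_mem_of_not_mem hz hx)]

theorem toLex_ncard_fiber_le_of_le {α : Type*} [Finite α] {f g : α → ℕ} (hfg : f ≤ g) :
    toLex (fun k => {a | g a = k}.ncard) ≤ toLex (fun k => {a | f a = k}.ncard) := by
  classical
  by_cases hlt : ∃ k a, f a = k ∧ f a < g a
  swap
  · push Not at hlt
    have hfg' : f = g := funext fun a => le_antisymm (hfg a) (hlt _ a rfl)
    rw [hfg']
  -- The least value taken by `f` at a point where `f < g` decides the comparison.
  set m := Nat.find hlt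
  obtain ⟨a₀, hfa₀, hlt₀⟩ := Nat.find_spec hlt
  have hfib : ∀ a, f a < m → f a = g a := fun a ha =>
    (hfg a).antisymm (not_lt.1 fun h => Nat.find_min hlt ha ⟨a, rfl, h⟩)
  refine le_of_lt ⟨m, fun k hk => ?_, Set.ncard_lt_ncard ⟨fun a ha => ?_, fun hsub => ?_⟩⟩
  · show {a | g a = k}.ncard = {a | f a = k}.ncard
    congr 1
    ext a
    refine ⟨fun ha => ?_, fun ha => ?_⟩
    · rw [Set.mem_ofPred_eq, hfib a (lt_of_le_of_lt (hfg a) (ha ▸ hk)), ha]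
    · rw [Set.mem_ofPred_eq, ← hfib a (ha ▸ hk), ha]
  · have hga : g a = m := ha
    by_contra hne
    have h : f a < m := lt_of_le_of_ne ((hfg a).trans_eq hga) hne
    exact h.ne ((hfib a h).trans hga)
  · exact hlt₀.ne (hfa₀.trans (hsub hfa₀).symm)

theorem sigDom_iff_toLex_lt {s t : ℕ → ℕ} : SigDom s t ↔ toLex t < toLex s :=
  ⟨fun ⟨l, h, hl⟩ => ⟨l, fun k hk => (h k hk).symm, hl⟩,
    fun ⟨l, h, hl⟩ => ⟨l, fun k hk => (h k hk).symm, hl⟩⟩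

section Signature

variable {n : ℕ} {r r' : Fin n → Fin n → ℕ} {M : Equiv.Perm (Fin n)}

theorem sig_congr (h : ∀ a, r a (M a) = r' a (M a)) : sig r M = sig r' M := by
  funext l
  simp only [sig, h]

theorem toLex_sig_le_of_le (h : ∀ a, r a (M a) ≤ r' a (M a)) :
    toLex (sig r' M) ≤ toLex (sig r M) :=
  toLex_ncard_fiber_le_of_le h

end Signature

def maxrank {n : ℕ} (rev : Fin n → Finset (Fin n)) (rnk : Fin n → Fin n → Fin n)
    (L : Fin n → Fin n) (a h : Fin n) : ℕ :=
  if h ∈ rev a then rnk a h else L a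

section Completion

variable {n : ℕ} {rev : Fin n → Finset (Fin n)} {rnk : Fin n → Fin n → Fin n}
  {L : Fin n → Fin n} {P : Fin n → (Fin n ≃ Fin n)}

theorem exists_hqCompletion_apply_eq_of_notMem (hinj : ∀ a, Set.InjOn (rnk a) (rev a))
    (hL : ∀ a, ∀ h ∈ rev a, rnk a h ≠ L a) (x : Fin n → Fin n) :
    ∃ P, HQCompletion rev rnk P ∧ ∀ a, x a ∉ rev a → P a (x a) = L a := by
  have hQ a : ∃ Q : Equiv.Perm (Fin n),
      Set.EqOn Q (rnk a) (rev a) ∧ (x a ∉ rev a → Q (x a) = L a) := by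
    by_cases hx : x a ∈ rev a
    · obtain ⟨Q, hQ⟩ := (hinj a).exists_perm_eqOn
      exact ⟨Q, hQ, absurd hx⟩
    · obtain ⟨Q, hQ, hQx⟩ := (hinj a).exists_perm_eqOn_apply_eq hx (hL a)
      exact ⟨Q, hQ, fun _ => hQx⟩
  choose P hP hPx using hQ
  exact ⟨P, fun a h hh => hP a hh, hPx⟩

theorem HQCompletion.le_maxrank (hP : HQCompletion rev rnk P)
    (hL : ∀ a, ∀ r : Fin n, (∀ h ∈ rev a, rnk a h ≠ r) → r ≤ L a) (a h : Fin n) :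
    (P a h : ℕ) ≤ maxrank rev rnk L a h := by
  unfold maxrank
  split_ifs with hh
  · rw [hP a h hh]
  · refine Fin.val_le_of_le (hL a _ fun h' hh' heq => hh ?_)
    rw [← hP a h' hh'] at heq
    exact (P a).injective heq ▸ hh'

end Completion

/-- Suppose every agent `a` has at least one unassigned rank, and `L a` is the
largest rank not assigned to any revealed house of `a`.  Let
`maxrank a h = rnk a h` for revealed `h` and `maxrank a h = L a` otherwise.
If `M` is necessarily rank-maximal (rank-maximal under every completion), then `M`
is rank-maximal in the instance with rank function `maxrank`. -/
theorem nrm_implies_rankMaximal_maxrank {n : ℕ}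
    (rev : Fin n → Finset (Fin n)) (rnk : Fin n → Fin n → Fin n)
    (hinj : ∀ a, Set.InjOn (rnk a) (rev a))
    (L : Fin n → Fin n)
    (hLunassigned : ∀ a, ∀ h ∈ rev a, rnk a h ≠ L a)
    (hLmax : ∀ a, ∀ r : Fin n, (∀ h ∈ rev a, rnk a h ≠ r) → r ≤ L a)
    (M : Equiv.Perm (Fin n))
    (hNRM : ∀ P : Fin n → (Fin n ≃ Fin n), HQCompletion rev rnk P →
      RankMaximal (fun a h => (P a h : ℕ)) M) :
    RankMaximal (fun a h => if h ∈ rev a then (rnk a h : ℕ) else (L a : ℕ)) M := by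
  intro M' hdom
  obtain ⟨P, hP, hPM⟩ := exists_hqCompletion_apply_eq_of_notMem hinj hLunassigned M
  have hsigM : sig (fun a h => (P a h : ℕ)) M = sig (maxrank rev rnk L) M := by
    refine sig_congr fun a => ?_
    by_cases hM : M a ∈ rev a
    · simp [maxrank, hM, hP a _ hM]
    · simp [maxrank, hM, hPM a hM]
  refine hNRM P hP M' ?_
  rw [sigDom_iff_toLex_lt, hsigM]
  exact (sigDom_iff_toLex_lt.1 hdom).trans_le
    (toLex_sig_le_of_le fun a => hP.le_maxrank hLmax a (M' a))
end
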